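/- Let C be a nodal curve and Z, Z' tails of C with k_Z = k_{Z'} = 3 such that the pair (Z, Z') is not perfect and Term_Z ∩ Term_{Z'} = {S} for a single node S. Suppose Z ∪ Z' crosses S (i.e., both components through S lie in Z ∪ Z'). Then Z ∪ Z' and Z ∧ Z' are 2-tails of C, with Term_{Z∪Z'} = (Term_Z ∪ Term_{Z'}) ∖ ({S} ∪ Term_{Z∧Z'}) consisting of one terminal point of Z and one of Z', and Term_{Z∧Z'} consisting of the remaining terminal point of Z and of Z'. -/

import Mathlib

open Finset

/-- A combinatorial model of a nodal curve: `V` is the set of irreducible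
components, `N` the set of nodes, `ends e` the (one or two) components through
the node `e`, `gen v` the geometric genus of the component `v`, and `base` the
component containing the marked smooth point `σ(0)`. -/
structure NodalGraph where
  V : Type
  N : Type
  [fV : Fintype V]
  [dV : DecidableEq V]
  [fN : Fintype N]
  [dN : DecidableEq N]
  ends : N → V × V
  gen : V → ℕ
  base : V

attribute [instance] NodalGraph.fV NodalGraph.dV NodalGraph.fN NodalGraph.dN

namespace NodalGraph

variable (G : NodalGraph)

/-- Two components are adjacent if some node lies on both. -/
def Adj (a b : G.V) : Prop := ∃ e, G.ends e = (a, b) ∨ G.ends e = (b, a)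

/-- The set of terminal points of a subcurve `Z`, i.e. the nodes in `Z ∩ Zᶜ`. -/
def Term (Z : Finset G.V) : Finset G.N :=
  univ.filter (fun e =>
    ((G.ends e).1 ∈ Z ∧ (G.ends e).2 ∉ Z) ∨ ((G.ends e).1 ∉ Z ∧ (G.ends e).2 ∈ Z))

/-- `k_Z`, the number of terminal points of `Z`. -/
def k (Z : Finset G.V) : ℕ := (G.Term Z).card

/-- A (nonempty) subcurve is connected. -/
def ConnSub (Z : Finset G.V) : Prop :=
  Z.Nonempty ∧ ∀ u ∈ Z, ∀ v ∈ Z,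
    Relation.ReflTransGen (fun a b => a ∈ Z ∧ b ∈ Z ∧ G.Adj a b) u v

/-- The whole curve is connected. -/
def Connected : Prop := G.ConnSub univ

/-- A tail: a proper subcurve `Z` with both `Z` and `Zᶜ` connected. -/
def IsTail (Z : Finset G.V) : Prop := Z ≠ univ ∧ G.ConnSub Z ∧ G.ConnSub Zᶜ

/-- A `m`-tail: a tail with `k_Z = m`. -/
def IsKTail (Z : Finset G.V) (m : ℕ) : Prop := G.IsTail Z ∧ G.k Z = m

/-- The node `e` lies on the component `v`. -/
def onComp (e : G.N) (v : G.V) : Prop := (G.ends e).1 = v ∨ (G.ends e).2 = v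

/-- The node `e`, as a point of the curve, lies on the subcurve `Z`. -/
def nodeOn (e : G.N) (Z : Finset G.V) : Prop := (G.ends e).1 ∈ Z ∨ (G.ends e).2 ∈ Z

/-- The subcurve `Z` crosses the node `e`: both branches of `e` lie in `Z`. -/
def crosses (Z : Finset G.V) (e : G.N) : Prop := (G.ends e).1 ∈ Z ∧ (G.ends e).2 ∈ Z

/-- `Z ≺ Z'`: strict inclusion with disjoint terminal points. -/
def prec (Z Z' : Finset G.V) : Prop := Z ⊂ Z' ∧ G.Term Z ∩ G.Term Z' = ∅

/-- The pair `(Z, Z')` is free: disjoint terminal points. -/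
def free (Z Z' : Finset G.V) : Prop := G.Term Z ∩ G.Term Z' = ∅

/-- The pair `(Z, Z')` is perfect. -/
def perfect (Z Z' : Finset G.V) : Prop := Z ⊆ Z' ∨ Z' ⊆ Z ∨ Zᶜ ⊆ Z' ∨ Z' ⊆ Zᶜ

/-- `T¹_γ`: the nested set of 1-tails containing `C_γ` and avoiding `σ(0)`. -/
def T1 (γ : G.V) : Set (Finset G.V) := { Z | G.IsKTail Z 1 ∧ γ ∈ Z ∧ G.base ∉ Z }

/-- The defining condition for the 2-tails entering `T²_{γ,γ'}`. -/
def cond2 (γ γ' : G.V) (Z : Finset G.V) : Prop :=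
  G.IsKTail Z 2 ∧ γ ∈ Z ∧ γ' ∈ Z ∧ G.base ∉ Z

/-- `W 0 ≺ W 1 ≺ ⋯ ≺ W (M-1)` is the nested set `T²_{γ,γ'}` of 2-tails:
each `W t` is minimal among the 2-tails `Z ⊇ C_γ ∪ C_γ'` with `σ(0) ∈ Zᶜ`
and `W (t-1) ≺ Z` (starting from `W_{-1} = ∅`), and the chain is maximal. -/
def IsNested2 (γ γ' : G.V) (M : ℕ) (W : ℕ → Finset G.V) : Prop :=
  (∀ t < M, Minimal (fun Z => G.cond2 γ γ' Z ∧ G.prec (if t = 0 then ∅ else W (t - 1)) Z) (W t)) ∧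
  ¬ ∃ Z, G.cond2 γ γ' Z ∧ G.prec (if M = 0 then ∅ else W (M - 1)) Z

/-- The set underlying a finite chain `W 0, …, W (M-1)`. -/
def chainSet (M : ℕ) (W : ℕ → Finset G.V) : Set (Finset G.V) := { Z | ∃ t < M, W t = Z }

/-- The defining condition for the 3-tails entering `T³_{γ,γ'}`:
3-tails that are moreover free with respect to every member of `T²_{γ,γ'}`. -/
def cond3 (γ γ' : G.V) (T2 : Set (Finset G.V)) (Z : Finset G.V) : Prop :=
  G.IsKTail Z 3 ∧ γ ∈ Z ∧ γ' ∈ Z ∧ G.base ∉ Z ∧ ∀ W ∈ T2, G.free Z W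

/-- `W 0 ≺ ⋯ ≺ W (M-1)` is the nested set `T³_{γ,γ'}` of 3-tails (relative to
the set `T2` of nested 2-tails). -/
def IsNested3 (γ γ' : G.V) (T2 : Set (Finset G.V)) (M : ℕ) (W : ℕ → Finset G.V) : Prop :=
  (∀ t < M, Minimal (fun Z => G.cond3 γ γ' T2 Z ∧ G.prec (if t = 0 then ∅ else W (t - 1)) Z) (W t)) ∧
  ¬ ∃ Z, G.cond3 γ γ' T2 Z ∧ G.prec (if M = 0 then ∅ else W (M - 1)) Z

end NodalGraph

/-!
Split the curve into the four regions `Z ∩ Z'`, `Z \ Z'`, `Z' \ Z` and `(Z ∪ Z')ᶜ`; they are all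
nonempty because the pair is not perfect, and every terminal point of `Z`, `Z'`, `Z ∪ Z'` or
`Z ∩ Z'` is a node joining two of them. Since `Z ∪ Z'` crosses `S`, the hypothesis
`Term_Z ∩ Term_{Z'} = {S}` says that `S` is the only node between `Z \ Z'` and `Z' \ Z` and that no
node joins `Z ∩ Z'` to `(Z ∪ Z')ᶜ`. Connectedness then forces one node between each pair of
adjacent regions, and `k_Z = k_{Z'} = 3` leaves room for no more. Finally, a subcurve `D` of a
connected subcurve `W` meeting `W \ D` in at most one node is connected, which makes `Z ∪ Z'` and
`Z ∩ Z'` tails.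
-/

namespace NodalGraph

variable {G : NodalGraph}

theorem Adj.symm {a b : G.V} (h : G.Adj a b) : G.Adj b a :=
  let ⟨e, he⟩ := h; ⟨e, he.symm⟩

@[simp]
theorem mem_term {Z : Finset G.V} {e : G.N} :
    e ∈ G.Term Z ↔
      ((G.ends e).1 ∈ Z ∧ (G.ends e).2 ∉ Z) ∨ ((G.ends e).1 ∉ Z ∧ (G.ends e).2 ∈ Z) := by
  simp [Term]

variable (G) in
def cut (X Y : Finset G.V) : Finset G.N :=
  univ.filter fun e =>
    ((G.ends e).1 ∈ X ∧ (G.ends e).2 ∈ Y) ∨ ((G.ends e).1 ∈ Y ∧ (G.ends e).2 ∈ X)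

section Cut

variable {X Y X' Y' Z : Finset G.V}

@[simp]
theorem mem_cut {e : G.N} :
    e ∈ G.cut X Y ↔
      ((G.ends e).1 ∈ X ∧ (G.ends e).2 ∈ Y) ∨ ((G.ends e).1 ∈ Y ∧ (G.ends e).2 ∈ X) := by
  simp [cut]

theorem cut_comm (X Y : Finset G.V) : G.cut X Y = G.cut Y X := by
  ext e
  simp only [mem_cut, or_comm]

theorem cut_mono (hX : X ⊆ X') (hY : Y ⊆ Y') : G.cut X Y ⊆ G.cut X' Y' := by
  intro e
  simp only [mem_cut]
  rintro (⟨h₁, h₂⟩ | ⟨h₁, h₂⟩)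
  exacts [Or.inl ⟨hX h₁, hY h₂⟩, Or.inr ⟨hY h₁, hX h₂⟩]

theorem disjoint_cut (h₁ : Disjoint X X') (h₂ : Disjoint X Y') :
    Disjoint (G.cut X Y) (G.cut X' Y') := by
  refine disjoint_left.2 fun e he he' => ?_
  have hX₁ : (G.ends e).1 ∈ X → (G.ends e).1 ∉ X' ∧ (G.ends e).1 ∉ Y' := fun h =>
    ⟨disjoint_left.1 h₁ h, disjoint_left.1 h₂ h⟩
  have hX₂ : (G.ends e).2 ∈ X → (G.ends e).2 ∉ X' ∧ (G.ends e).2 ∉ Y' := fun h =>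
    ⟨disjoint_left.1 h₁ h, disjoint_left.1 h₂ h⟩
  simp only [mem_cut] at he he'
  tauto

theorem ne_of_mem_cut {e e' : G.N} (he : e ∈ G.cut X Y) (he' : e' ∈ G.cut X' Y')
    (h₁ : Disjoint X X') (h₂ : Disjoint X Y') : e ≠ e' := by
  rintro rfl
  exact disjoint_left.1 (disjoint_cut h₁ h₂) he he'

end Cut

section Connectivity

variable {W X Y D P : Finset G.V}

theorem ConnSub.union (hX : G.ConnSub X) (hY : G.ConnSub Y) (hXY : (X ∩ Y).Nonempty) :
    G.ConnSub (X ∪ Y) := by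
  obtain ⟨w, hw⟩ := hXY
  obtain ⟨hwX, hwY⟩ := mem_inter.1 hw
  let r := fun a b => a ∈ X ∪ Y ∧ b ∈ X ∪ Y ∧ G.Adj a b
  have : Std.Symm r := ⟨fun _ _ h => ⟨h.2.1, h.1, h.2.2.symm⟩⟩
  have to_w : ∀ u ∈ X ∪ Y, Relation.ReflTransGen r u w := by
    intro u hu
    rcases mem_union.1 hu with hu | hu
    · exact Relation.ReflTransGen.mono (fun _ _ h => ⟨subset_union_left h.1,
        subset_union_left h.2.1, h.2.2⟩) _ _ (hX.2 u hu w hwX)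
    · exact Relation.ReflTransGen.mono (fun _ _ h => ⟨subset_union_right h.1,
        subset_union_right h.2.1, h.2.2⟩) _ _ (hY.2 u hu w hwY)
  exact ⟨⟨w, mem_union_left _ hwX⟩, fun u hu v hv =>
    (to_w u hu).trans (Std.Symm.symm _ _ (to_w v hv))⟩

theorem ConnSub.cut_nonempty (hW : G.ConnSub W) (hYW : Y ⊆ W) (hY : Y.Nonempty)
    (hWY : (W \ Y).Nonempty) : (G.cut Y (W \ Y)).Nonempty := by
  obtain ⟨u, hu⟩ := hY
  obtain ⟨v, hv⟩ := hWY
  obtain ⟨hvW, hvY⟩ := mem_sdiff.1 hv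
  by_contra hcut
  suffices h : ∀ w, Relation.ReflTransGen (fun a b => a ∈ W ∧ b ∈ W ∧ G.Adj a b) u w → w ∈ Y from
    hvY (h v (hW.2 u (hYW hu) v hvW))
  intro w hw
  induction hw with
  | refl => exact hu
  | tail _ hab haY =>
    obtain ⟨-, hbW, e, he⟩ := hab
    by_contra hbY
    exact hcut ⟨e, by rcases he with he | he <;> simp [he, haY, hbW, hbY]⟩

theorem cut_sdiff_subset_of_closed (hP : ∀ a ∈ P, ∀ b ∈ D, G.Adj a b → b ∈ P) :
    G.cut P (W \ P) ⊆ G.cut P (W \ D) := by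
  intro e
  simp only [mem_cut, mem_sdiff]
  rintro (⟨h₁, h₂, h₃⟩ | ⟨⟨h₁, h₂⟩, h₃⟩)
  · exact Or.inl ⟨h₁, h₂, fun hD => h₃ (hP _ h₁ _ hD ⟨e, Or.inl rfl⟩)⟩
  · exact Or.inr ⟨⟨h₁, fun hD => h₂ (hP _ h₃ _ hD ⟨e, Or.inr rfl⟩)⟩, h₃⟩

theorem ConnSub.of_card_cut_le_one (hW : G.ConnSub W) (hDW : D ⊆ W) (hD : D.Nonempty)
    (hcut : (G.cut D (W \ D)).card ≤ 1) : G.ConnSub D := by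
  classical
  refine ⟨hD, fun u hu v hv => by_contra fun huv => ?_⟩
  set P := D.filter (Relation.ReflTransGen (fun a b => a ∈ D ∧ b ∈ D ∧ G.Adj a b) u)
  have huP : u ∈ P := mem_filter.2 ⟨hu, Relation.ReflTransGen.refl⟩
  have hvP : v ∉ P := fun h => huv (mem_filter.1 h).2
  have hPD : P ⊆ D := filter_subset _ _
  have hP : ∀ a ∈ P, ∀ b ∈ D, G.Adj a b → b ∈ P := fun a ha b hb hab =>
    mem_filter.2 ⟨hb, (mem_filter.1 ha).2.tail ⟨hPD ha, hb, hab⟩⟩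
  have hQ : ∀ a ∈ D \ P, ∀ b ∈ D, G.Adj a b → b ∈ D \ P := fun a ha b hb hab =>
    mem_sdiff.2 ⟨hb, fun hbP => (mem_sdiff.1 ha).2 (hP b hbP a (mem_sdiff.1 ha).1 hab.symm)⟩
  obtain ⟨e, he⟩ := hW.cut_nonempty (hPD.trans hDW) ⟨u, huP⟩ ⟨v, mem_sdiff.2 ⟨hDW hv, hvP⟩⟩
  obtain ⟨e', he'⟩ := hW.cut_nonempty (sdiff_subset.trans hDW) ⟨v, mem_sdiff.2 ⟨hv, hvP⟩⟩
    ⟨u, mem_sdiff.2 ⟨hDW hu, fun h => (mem_sdiff.1 h).2 huP⟩⟩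
  replace he := cut_sdiff_subset_of_closed hP he
  replace he' := cut_sdiff_subset_of_closed hQ he'
  refine ne_of_mem_cut he he' disjoint_sdiff ?_ <| card_le_one.1 hcut e
    (cut_mono hPD subset_rfl he) e' (cut_mono sdiff_subset subset_rfl he')
  exact disjoint_left.2 fun x hx hx' => (mem_sdiff.1 hx').2 (hPD hx)

end Connectivity

section TwoSubcurves

variable {Z Z' : Finset G.V} {S : G.N}

theorem regions_nonempty_of_not_perfect (h : ¬ G.perfect Z Z') :
    (Z \ Z').Nonempty ∧ (Z' \ Z).Nonempty ∧ (Z ∩ Z').Nonempty ∧ (Z ∪ Z')ᶜ.Nonempty := by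
  simp only [perfect, not_or] at h
  obtain ⟨h₁, h₂, h₃, h₄⟩ := h
  obtain ⟨x, hx⟩ := sdiff_nonempty.2 h₃
  rw [subset_compl_iff_disjoint_right, not_disjoint_iff_nonempty_inter, inter_comm] at h₄
  exact ⟨sdiff_nonempty.2 h₁, sdiff_nonempty.2 h₂, h₄, x, by simpa using hx⟩

theorem term_eq_cuts :
    G.Term Z = G.cut (Z ∩ Z') (Z' \ Z) ∪ G.cut (Z ∩ Z') (Z ∪ Z')ᶜ ∪
      G.cut (Z \ Z') (Z' \ Z) ∪ G.cut (Z \ Z') (Z ∪ Z')ᶜ := by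
  ext e
  simp only [mem_term, mem_cut, mem_union, mem_inter, mem_sdiff, mem_compl]
  grind

theorem term_union_eq_cuts :
    G.Term (Z ∪ Z') = G.cut (Z ∩ Z') (Z ∪ Z')ᶜ ∪ G.cut (Z \ Z') (Z ∪ Z')ᶜ ∪
      G.cut (Z' \ Z) (Z ∪ Z')ᶜ := by
  ext e
  simp only [mem_term, mem_cut, mem_union, mem_inter, mem_sdiff, mem_compl]
  grind

theorem term_inter_eq_cuts :
    G.Term (Z ∩ Z') = G.cut (Z ∩ Z') (Z \ Z') ∪ G.cut (Z ∩ Z') (Z' \ Z) ∪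
      G.cut (Z ∩ Z') (Z ∪ Z')ᶜ := by
  ext e
  simp only [mem_term, mem_cut, mem_union, mem_inter, mem_sdiff, mem_compl]
  grind

theorem term_inter_term_eq_cuts :
    G.Term Z ∩ G.Term Z' = G.cut (Z ∩ Z') (Z ∪ Z')ᶜ ∪ G.cut (Z \ Z') (Z' \ Z) := by
  ext e
  simp only [mem_term, mem_cut, mem_union, mem_inter, mem_sdiff, mem_compl]
  grind

theorem term_union_eq_sdiff (hIO : G.cut (Z ∩ Z') (Z ∪ Z')ᶜ = ∅)
    (hAB : G.cut (Z \ Z') (Z' \ Z) = {S}) :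
    G.Term (Z ∪ Z') = (G.Term Z ∪ G.Term Z') \ ({S} ∪ G.Term (Z ∩ Z')) := by
  ext e
  have hIO := eq_empty_iff_forall_notMem.1 hIO e
  have hAB := Finset.ext_iff.1 hAB e
  simp only [mem_term, mem_cut, mem_union, mem_inter, mem_sdiff, mem_compl,
    mem_singleton] at hIO hAB ⊢
  grind

theorem cut_eq_of_term_inter_term_eq_singleton (hTT : G.Term Z ∩ G.Term Z' = {S})
    (hS : G.crosses (Z ∪ Z') S) :
    G.cut (Z ∩ Z') (Z ∪ Z')ᶜ = ∅ ∧ G.cut (Z \ Z') (Z' \ Z) = {S} := by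
  rw [term_inter_term_eq_cuts] at hTT
  have hSIO : S ∉ G.cut (Z ∩ Z') (Z ∪ Z')ᶜ := by
    simp only [mem_cut, mem_compl]
    rintro (h | h)
    exacts [h.2 hS.2, h.1 hS.1]
  have hIO : G.cut (Z ∩ Z') (Z ∪ Z')ᶜ = ∅ := eq_empty_of_forall_notMem fun e he =>
    hSIO (mem_singleton.1 (hTT ▸ mem_union_left _ he) ▸ he)
  rw [hIO, empty_union] at hTT
  exact ⟨hIO, hTT⟩

/-- Connectedness of `Z'` and of `Z'ᶜ` provides a node from `Z ∩ Z'` to `Z' \ Z` and one from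
`Z \ Z'` to `(Z ∪ Z')ᶜ`; besides `S`, a 3-tail has room for exactly these two. -/
theorem exists_term_eq_of_k_eq_three (hk : G.k Z = 3) (hZ' : G.ConnSub Z')
    (hZ'c : G.ConnSub Z'ᶜ)
    (hA : (Z \ Z').Nonempty) (hB : (Z' \ Z).Nonempty) (hI : (Z ∩ Z').Nonempty)
    (hO : (Z ∪ Z')ᶜ.Nonempty) (hIO : G.cut (Z ∩ Z') (Z ∪ Z')ᶜ = ∅)
    (hAB : G.cut (Z \ Z') (Z' \ Z) = {S}) :
    ∃ b c, G.cut (Z ∩ Z') (Z' \ Z) = {b} ∧ G.cut (Z \ Z') (Z ∪ Z')ᶜ = {c} ∧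
      G.Term Z = {b, S, c} := by
  have hIB : (G.cut (Z ∩ Z') (Z' \ Z)).Nonempty := by
    rw [← sdiff_inter_self_right]
    exact hZ'.cut_nonempty inter_subset_right hI (by rwa [sdiff_inter_self_right])
  have hAO : (G.cut (Z \ Z') (Z ∪ Z')ᶜ).Nonempty := by
    have hOA : Z'ᶜ \ (Z ∪ Z')ᶜ = Z \ Z' := by rw [compl_sdiff_compl, union_sdiff_right]
    rw [cut_comm, ← hOA]
    exact hZ'c.cut_nonempty (compl_subset_compl.2 subset_union_right) hO (hOA ▸ hA)
  have hTerm := term_eq_cuts (G := G) (Z := Z) (Z' := Z')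
  rw [hIO, hAB, union_empty] at hTerm
  have hk' : (G.cut (Z ∩ Z') (Z' \ Z)).card + 1 + (G.cut (Z \ Z') (Z ∪ Z')ᶜ).card = 3 := by
    rw [← hk, k, hTerm, card_union_of_disjoint, card_union_of_disjoint, card_singleton]
    · exact hAB ▸ disjoint_cut (disjoint_left.2 (by simp; tauto))
        (disjoint_left.2 (by simp; tauto))
    · rw [← hAB, cut_comm (Z \ Z')]
      exact disjoint_union_left.2
        ⟨disjoint_cut (disjoint_left.2 (by simp; tauto)) (disjoint_left.2 (by simp; tauto)),
          disjoint_cut (disjoint_left.2 (by simp; tauto)) (disjoint_left.2 (by simp; tauto))⟩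
  have := hIB.card_pos
  have := hAO.card_pos
  obtain ⟨b, hb⟩ := card_eq_one.1 (show (G.cut (Z ∩ Z') (Z' \ Z)).card = 1 by omega)
  obtain ⟨c, hc⟩ := card_eq_one.1 (show (G.cut (Z \ Z') (Z ∪ Z')ᶜ).card = 1 by omega)
  refine ⟨b, c, hb, hc, ?_⟩
  rw [hTerm, hb, hc]
  ext
  simp

theorem isTail_union (hZ : G.ConnSub Z) (hZ' : G.ConnSub Z') (hZc : G.ConnSub Zᶜ)
    (hI : (Z ∩ Z').Nonempty) (hO : (Z ∪ Z')ᶜ.Nonempty)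
    (hBO : (G.cut (Z' \ Z) (Z ∪ Z')ᶜ).card ≤ 1) : G.IsTail (Z ∪ Z') := by
  refine ⟨fun h => by simp [h] at hO, hZ.union hZ' hI, hZc.of_card_cut_le_one
    (compl_subset_compl.2 subset_union_left) hO ?_⟩
  rwa [compl_sdiff_compl, union_sdiff_left, cut_comm]

theorem isTail_inter (hZ' : G.ConnSub Z') (hZc : G.ConnSub Zᶜ) (hZ'c : G.ConnSub Z'ᶜ)
    (hA : (Z \ Z').Nonempty) (hI : (Z ∩ Z').Nonempty) (hO : (Z ∪ Z')ᶜ.Nonempty)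
    (hIB : (G.cut (Z ∩ Z') (Z' \ Z)).card ≤ 1) : G.IsTail (Z ∩ Z') := by
  refine ⟨fun h => ?_, hZ'.of_card_cut_le_one inter_subset_right hI ?_, ?_⟩
  · obtain ⟨a, ha⟩ := hA
    exact (mem_sdiff.1 ha).2 (mem_inter.1 (h ▸ mem_univ a)).2
  · rwa [sdiff_inter_self_right]
  · rw [compl_inter]
    exact hZc.union hZ'c (by rwa [← compl_union])

end TwoSubcurves

end NodalGraph

theorem union_and_wedge_of_three_tails_general
    (G : NodalGraph) (Z Z' : Finset G.V) (S : G.N)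
    (hZ : G.IsKTail Z 3) (hZ' : G.IsKTail Z' 3)
    (hnp : ¬ G.perfect Z Z')
    (hTT : G.Term Z ∩ G.Term Z' = {S})
    (hcross : G.crosses (Z ∪ Z') S) :
    G.IsKTail (Z ∪ Z') 2 ∧ G.IsKTail (Z ∩ Z') 2 ∧
    G.Term (Z ∪ Z') = (G.Term Z ∪ G.Term Z') \ ({S} ∪ G.Term (Z ∩ Z')) ∧
    (∃ U₁ ∈ G.Term Z, ∃ U₂ ∈ G.Term Z', U₁ ≠ U₂ ∧ G.Term (Z ∪ Z') = {U₁, U₂}) ∧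
    (∃ U₁' ∈ G.Term Z, ∃ U₂' ∈ G.Term Z', U₁' ≠ U₂' ∧ G.Term (Z ∩ Z') = {U₁', U₂'}) := by
  open NodalGraph in
  obtain ⟨⟨-, hZc, hZcc⟩, hkZ⟩ := hZ
  obtain ⟨⟨-, hZ'c, hZ'cc⟩, hkZ'⟩ := hZ'
  obtain ⟨hA, hB, hI, hO⟩ := regions_nonempty_of_not_perfect hnp
  obtain ⟨hIO, hAB⟩ := cut_eq_of_term_inter_term_eq_singleton hTT hcross
  obtain ⟨b, c, hb, hc, hTZ⟩ := exists_term_eq_of_k_eq_three hkZ hZ'c hZ'cc hA hB hI hO hIO hAB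
  obtain ⟨a, d, ha, hd, hTZ'⟩ := exists_term_eq_of_k_eq_three hkZ' hZc hZcc hB hA
    (by rwa [inter_comm]) (by rwa [union_comm]) (by rwa [inter_comm, union_comm])
    (by rwa [cut_comm])
  rw [inter_comm] at ha
  rw [union_comm] at hd
  have hU : G.Term (Z ∪ Z') = {c, d} := by
    rw [term_union_eq_cuts, hIO, hc, hd, empty_union]
    rfl
  have hW : G.Term (Z ∩ Z') = {b, a} := by
    rw [term_inter_eq_cuts, hIO, ha, hb, union_empty, union_comm]
    rfl
  have hcd : c ≠ d := ne_of_mem_cut (hc ▸ mem_singleton_self c) (hd ▸ mem_singleton_self d)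
    (disjoint_left.2 (by simp; tauto)) (disjoint_left.2 (by simp; tauto))
  have hba : b ≠ a := ne_of_mem_cut (cut_comm (G := G) _ _ ▸ hb ▸ mem_singleton_self b)
    (ha ▸ mem_singleton_self a) (disjoint_left.2 (by simp; tauto))
    (disjoint_left.2 (by simp; tauto))
  refine ⟨⟨isTail_union hZc hZ'c hZcc hI hO (by rw [hd, card_singleton]),
      by rw [k, hU, card_pair hcd]⟩,
    ⟨isTail_inter hZ'c hZcc hZ'cc hA hI hO (by rw [hb, card_singleton]),
      by rw [k, hW, card_pair hba]⟩,
    term_union_eq_sdiff hIO hAB, ⟨c, by simp [hTZ], d, by simp [hTZ'], hcd, hU⟩,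
    ⟨b, by simp [hTZ], a, by simp [hTZ'], hba, hW⟩⟩

/-- from the proof of Theorem 3.6: two 3-tails `Z, Z'` whose
pair is not perfect, with `Term_Z ∩ Term_{Z'} = {S}` and `Z ∪ Z'` crossing `S`,
have `Z ∪ Z'` and `Z ∧ Z'` 2-tails with the stated terminal points. -/
theorem union_and_wedge_of_three_tails
    (G : NodalGraph) (hconn : G.Connected) (Z Z' : Finset G.V) (S : G.N)
    (hZ : G.IsKTail Z 3) (hZ' : G.IsKTail Z' 3)
    (hnp : ¬ G.perfect Z Z')
    (hTT : G.Term Z ∩ G.Term Z' = {S})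
    (hcross : G.crosses (Z ∪ Z') S) :
    G.IsKTail (Z ∪ Z') 2 ∧ G.IsKTail (Z ∩ Z') 2 ∧
    G.Term (Z ∪ Z') = (G.Term Z ∪ G.Term Z') \ ({S} ∪ G.Term (Z ∩ Z')) ∧
    (∃ U₁ ∈ G.Term Z, ∃ U₂ ∈ G.Term Z', U₁ ≠ U₂ ∧ G.Term (Z ∪ Z') = {U₁, U₂}) ∧
    (∃ U₁' ∈ G.Term Z, ∃ U₂' ∈ G.Term Z', U₁' ≠ U₂' ∧ G.Term (Z ∩ Z') = {U₁', U₂'}) :=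
  union_and_wedge_of_three_tails_general G Z Z' S hZ hZ' hnp hTT hcross
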